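/- Let N be a binary unrooted phylogenetic network with no cherries, and let a = (a_1,...,a_k), k ≥ 2, be a maximal chain contained in a pendant level-1 blob (a cycle attached to the rest of the network by one non-trivial cut-edge, carrying exactly the leaves of the chain). Then the shortest distance between the end-leaves satisfies: d_m(a_1,a_k) = k+1 if 2 ≤ k ≤ 3, and d_m(a_1,a_k) = 4 if k ≥ 4; and the longest distance satisfies d_l(a_1,a_k) = max(k+1, 4). -/

import Mathlib

open SimpleGraph

/-- The degree of a vertex (defined without decidability assumptions). -/
noncomputable def gdeg {V : Type} (G : SimpleGraph V) (v : V) : ℕ :=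
  {u | G.Adj v u}.ncard

/-- The longest distance between two vertices: the supremum of the lengths of
paths between them. -/
noncomputable def ldistV {V : Type} (G : SimpleGraph V) (u v : V) : ℕ :=
  sSup {n | ∃ p : G.Walk u v, p.IsPath ∧ p.length = n}

/-- A binary unrooted phylogenetic network on the leaf-label set `X`:
a simple connected graph whose degree-1 vertices (the leaves) are bijectively
labelled by `X`, every other vertex having degree 3, with at least two leaves. -/
structure PhyloNet (V X : Type) where
  G : SimpleGraph V
  conn : G.Connected
  leaf : X → V
  leafInj : Function.Injective leaf
  leafDeg : ∀ x : X, gdeg G (leaf x) = 1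
  internalDeg : ∀ v : V, v ∉ Set.range leaf → gdeg G v = 3
  leafSurj : ∀ v : V, gdeg G v = 1 → v ∈ Set.range leaf
  twoLeaves : Nontrivial X

namespace PhyloNet

variable {V W X : Type}

/-- Shortest distance between two leaves. -/
noncomputable def dm (N : PhyloNet V X) (x y : X) : ℕ :=
  N.G.dist (N.leaf x) (N.leaf y)

/-- Longest distance between two leaves. -/
noncomputable def dl (N : PhyloNet V X) (x y : X) : ℕ :=
  ldistV N.G (N.leaf x) (N.leaf y)

/-- Two networks on the same label set realize the same shortest distance matrix. -/
def SameDist (N : PhyloNet V X) (M : PhyloNet W X) : Prop :=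
  ∀ x y : X, N.dm x y = M.dm x y

/-- Two networks realize the same longest distance matrix. -/
def SameLDist (N : PhyloNet V X) (M : PhyloNet W X) : Prop :=
  ∀ x y : X, N.dl x y = M.dl x y

/-- Label-preserving isomorphism of networks. -/
def Isom (N : PhyloNet V X) (M : PhyloNet W X) : Prop :=
  ∃ φ : N.G ≃g M.G, ∀ x : X, φ (N.leaf x) = M.leaf x

/-- `N` is reconstructible from its shortest distance matrix. -/
def Reconstructible (N : PhyloNet V X) : Prop :=
  ∀ (W : Type) (M : PhyloNet W X), N.SameDist M → N.Isom M

/-- Two leaves form a cherry: they share a common neighbour. -/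
def Cherry (N : PhyloNet V X) (x y : X) : Prop :=
  x ≠ y ∧ ∃ v : V, N.G.Adj (N.leaf x) v ∧ N.G.Adj (N.leaf y) v

def NoCherry (N : PhyloNet V X) : Prop := ∀ x y : X, ¬ N.Cherry x y

/-- `uv` is a cut-edge. -/
def IsCutEdge (N : PhyloNet V X) (u v : V) : Prop :=
  N.G.Adj u v ∧ ¬ (N.G.deleteEdges {s(u, v)}).Reachable u v

/-- Leaf `x` lies on the `u`-side of the cut-edge `uv`. -/
def leafSide (N : PhyloNet V X) (u v : V) (x : X) : Prop :=
  (N.G.deleteEdges {s(u, v)}).Reachable (N.leaf x) u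

/-- `A` is a part of a cut-edge induced split of `N`. -/
def IsSplitPart (N : PhyloNet V X) (A : Set X) : Prop :=
  ∃ u v : V, N.IsCutEdge u v ∧ ∀ x : X, N.leafSide u v x ↔ x ∈ A

/-- Every cut-edge of `N` induces a unique split. -/
def UniqueSplits (N : PhyloNet V X) : Prop :=
  ∀ u v u' v' : V, N.IsCutEdge u v → N.IsCutEdge u' v' →
    ((∀ x : X, N.leafSide u v x ↔ N.leafSide u' v' x) ∨
      (∀ x : X, N.leafSide u v x ↔ N.leafSide v' u' x)) →
    s(u, v) = s(u', v')

/-- `l` is a chain of leaves: the neighbours of its members form a path. -/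
def IsChain (N : PhyloNet V X) (l : List X) : Prop :=
  l ≠ [] ∧ ∃ vs : List V, ∃ h : vs.length = l.length,
    vs.Nodup ∧ List.Chain' N.G.Adj vs ∧
    ∀ (i : ℕ) (hi : i < l.length),
      N.G.Adj (N.leaf (l.get ⟨i, hi⟩)) (vs.get ⟨i, by omega⟩)

/-- A maximal chain: not a subsequence of any other chain. -/
def MaxChain (N : PhyloNet V X) (l : List X) : Prop :=
  N.IsChain l ∧ ∀ m : List X, N.IsChain m → l.Sublist m → m = l

end PhyloNet

/-- A set of at least three vertices is 2-connected if it induces a connected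
graph that stays connected after removal of any single vertex. -/
def TwoConn {V : Type} (G : SimpleGraph V) (B : Set V) : Prop :=
  3 ≤ B.ncard ∧ (G.induce B).Connected ∧
    ∀ v ∈ B, (G.induce (B \ {v})).Connected

/-- A blob: a maximal 2-connected set of vertices (with at least three vertices). -/
def IsBlob {V : Type} (G : SimpleGraph V) (B : Set V) : Prop :=
  TwoConn G B ∧ ∀ C : Set V, TwoConn G C → B ⊆ C → C = B

/-- Number of edges with both endpoints in `B`. -/
noncomputable def edgesIn {V : Type} (G : SimpleGraph V) (B : Set V) : ℕ :=
  {e : Sym2 V | e ∈ G.edgeSet ∧ ∀ v ∈ e, v ∈ B}.ncard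

/-- `G` is a level-(≤ k) network: every blob has cycle rank at most `k`,
i.e. removing at most `k` edges from each blob yields a tree. -/
def LevelLE {V : Type} (G : SimpleGraph V) (k : ℕ) : Prop :=
  ∀ B : Set V, IsBlob G B → edgesIn G B ≤ (B.ncard - 1) + k

namespace PhyloNet

variable {V X : Type}

/-- A trivial cut-edge is one incident to a leaf. -/
def TrivialCutEdge (N : PhyloNet V X) (u v : V) : Prop :=
  u ∈ Set.range N.leaf ∨ v ∈ Set.range N.leaf

/-- A pendant blob: a blob incident to exactly one non-trivial cut-edge. -/
def IsPendantBlob (N : PhyloNet V X) (B : Set V) : Prop :=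
  IsBlob N.G B ∧
    ∃! e : Sym2 V, ∃ u v : V, e = s(u, v) ∧ u ∈ B ∧ v ∉ B ∧
      N.G.Adj u v ∧ ¬ N.TrivialCutEdge u v

/-- The leaves attached to (contained in) a blob. -/
def blobLeaves (N : PhyloNet V X) (B : Set V) : Set X :=
  {x : X | ∃ u ∈ B, N.G.Adj (N.leaf x) u}

/-- `N` has a leaf on each generator side: every vertex is within shortest
distance 2 of some leaf. -/
def LeafOnEachGenSide (N : PhyloNet V X) : Prop :=
  ∀ v : V, ∃ x : X, N.G.dist v (N.leaf x) ≤ 2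

end PhyloNet

/-!
A leaf can only be an endpoint of a path, so a path between the end-leaves `a_0`, `a_{k-1}`
consists of their two pendant edges and a path from `v_0` to `v_{k-1}`. Everything outside the
cycle and its leaves hangs off `w`, so a path that reaches `w` from `v_0` cannot leave the cycle
and must go straight on to `v_{k-1}`; a path that starts along the chain finds at each `v_i` only
the dead-end leaf `a_i` besides `v_{i+1}`. So the path lengths between the end-leaves are exactly
`2 + 2 = 4` and `(k - 1) + 2 = k + 1`, and `d_m`, `d_l` are their minimum and maximum.
-/

namespace SimpleGraph

variable {V : Type*} {G : SimpleGraph V}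

def pathLengths (G : SimpleGraph V) (u v : V) : Set ℕ :=
  {n | ∃ p : G.Walk u v, p.IsPath ∧ p.length = n}

theorem dist_eq_min_of_pathLengths_eq {u v : V} {m n : ℕ}
    (h : G.pathLengths u v = {m, n}) : G.dist u v = min m n := by
  obtain ⟨p, -, hpm⟩ : m ∈ G.pathLengths u v := h ▸ Set.mem_insert m {n}
  obtain ⟨q, -, hqn⟩ : n ∈ G.pathLengths u v := h ▸ Set.mem_insert_of_mem m rfl
  obtain ⟨r, hr, hrd⟩ := p.reachable.exists_path_of_dist
  have hd : G.dist u v = m ∨ G.dist u v = n := by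
    simpa [h] using (show G.dist u v ∈ G.pathLengths u v from ⟨r, hr, hrd⟩)
  have hdm : G.dist u v ≤ m := hpm ▸ dist_le p
  have hdn : G.dist u v ≤ n := hqn ▸ dist_le q
  omega

namespace Walk

theorem IsPath.notMem_support_of_subsingleton {x y u : V} {p : G.Walk x y} (hp : p.IsPath)
    (hu : (G.neighborSet u).Subsingleton) (hux : u ≠ x) (huy : u ≠ y) : u ∉ p.support := by
  intro hmem
  obtain ⟨n, rfl, hn⟩ := p.mem_support_iff_exists_getVert.mp hmem
  have h0 : n ≠ 0 := by rintro rfl; exact hux p.getVert_zero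
  have hl : n ≠ p.length := by rintro rfl; exact huy p.getVert_length
  have hprev : G.Adj (p.getVert n) (p.getVert (n - 1)) := by
    simpa [Nat.sub_add_cancel (Nat.pos_of_ne_zero h0)] using
      (p.adj_getVert_succ (i := n - 1) (by omega)).symm
  have hnext : G.Adj (p.getVert n) (p.getVert (n + 1)) := p.adj_getVert_succ (by omega)
  have := hp.getVert_injOn (show n - 1 ≤ p.length by omega) (show n + 1 ≤ p.length by omega)
    (hu hprev hnext)
  omega

theorem exists_isPath_length_eq_succ_of_subsingleton {x y z : V} {p : G.Walk y z}
    (hp : p.IsPath) (hyz : y ≠ z) (hyx : G.Adj y x) (hy : (G.neighborSet y).Subsingleton) :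
    ∃ q : G.Walk x z, q.IsPath ∧ p.length = q.length + 1 := by
  obtain ⟨x', hyx', q, rfl⟩ := p.exists_eq_cons_of_ne hyz
  obtain rfl : x' = x := hy hyx' hyx
  exact ⟨q, hp.of_cons, rfl⟩

theorem mem_support_of_forall_adj_eq {u z w : V} (S : Set V) (p : G.Walk u z)
    (hu : u ∉ S) (hz : z ∈ S) (hS : ∀ x y, G.Adj x y → x ∉ S → y ∈ S → y = w) :
    w ∈ p.support := by
  obtain ⟨d, hd, hdS, hdS'⟩ := p.exists_boundary_dart Sᶜ hu (by simpa using hz)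
  rw [← hS _ _ d.adj hdS (by simpa using hdS')]
  exact p.dart_snd_mem_support_of_mem_darts hd

theorem exists_isPath_of_injective_of_adj {n : ℕ} {c : Fin n → V} (hc : Function.Injective c)
    (hadj : ∀ (i : ℕ) (hi : i + 1 < n),
      G.Adj (c ⟨i, Nat.lt_of_succ_lt hi⟩) (c ⟨i + 1, hi⟩))
    {f l : Fin n} (hf : (f : ℕ) = 0) (hl : (l : ℕ) + 1 = n) :
    ∃ p : G.Walk (c f) (c l), p.IsPath ∧ p.length = n - 1 := by
  have hne : List.ofFn c ≠ [] := by
    rw [ne_eq, List.ofFn_eq_nil_iff]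
    omega
  have hhead : (List.ofFn c).head hne = c f := by
    rw [List.head_ofFn]
    exact congrArg c (Fin.ext hf.symm)
  have hlast : (List.ofFn c).getLast hne = c l := by
    rw [List.getLast_ofFn]
    exact congrArg c (Fin.ext (show n - 1 = l by omega))
  refine ⟨(ofSupport _ hne (List.isChain_ofFn.mpr hadj)).copy hhead hlast, ?_, ?_⟩
  · rw [isPath_copy, isPath_def, support_ofSupport]
    exact List.nodup_ofFn.mpr hc
  · simp

end Walk

open Walk in
theorem pathLengths_eq_image_of_subsingleton {x x' y y' : V} (hx : G.Adj x x')
    (hy : G.Adj y y') (hxs : (G.neighborSet x).Subsingleton)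
    (hys : (G.neighborSet y).Subsingleton) (hxy : x ≠ y) (hxy' : x ≠ y') (hyx' : y ≠ x') :
    G.pathLengths x y = (· + 2) '' G.pathLengths x' y' := by
  ext n
  constructor
  · rintro ⟨p, hp, rfl⟩
    obtain ⟨q, hq, hpq⟩ := exists_isPath_length_eq_succ_of_subsingleton hp hxy hx hxs
    obtain ⟨r, hr, hqr⟩ :=
      exists_isPath_length_eq_succ_of_subsingleton hq.reverse hyx' hy hys
    refine ⟨r.length, ⟨r.reverse, hr.reverse, length_reverse _⟩, ?_⟩
    rw [length_reverse] at hqr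
    change r.length + 2 = p.length
    omega
  · rintro ⟨_, ⟨r, hr, rfl⟩, rfl⟩
    have hxr : x ∉ r.support := hr.notMem_support_of_subsingleton hxs hx.ne hxy'
    have hyr : y ∉ r.support := hr.notMem_support_of_subsingleton hys hyx' hy.ne
    refine ⟨cons hx (r.concat hy.symm), ?_, by simp⟩
    rw [cons_isPath_iff, concat_isPath_iff, support_concat]
    simp [hr, hxr, hyr, hxy]

end SimpleGraph

theorem ldistV_eq_max_of_pathLengths_eq {V : Type} {G : SimpleGraph V} {u v : V} {m n : ℕ}
    (h : G.pathLengths u v = {m, n}) : ldistV G u v = max m n := by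
  rw [ldistV, ← pathLengths, h, csSup_pair]

namespace PhyloNet

variable {V X : Type} {N : PhyloNet V X}

theorem subsingleton_neighborSet_leaf (N : PhyloNet V X) (x : X) :
    (N.G.neighborSet (N.leaf x)).Subsingleton := by
  obtain ⟨z, hz⟩ := Set.ncard_eq_one.mp (N.leafDeg x)
  change {u | N.G.Adj (N.leaf x) u}.Subsingleton
  exact hz ▸ Set.subsingleton_singleton

theorem eq_of_adj_leaf {x : X} {u u' : V} (hu : N.G.Adj (N.leaf x) u)
    (hu' : N.G.Adj (N.leaf x) u') : u = u' :=
  N.subsingleton_neighborSet_leaf x hu hu'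

theorem notMem_range_leaf_of_adj {z u u' : V} (hu : N.G.Adj z u) (hu' : N.G.Adj z u')
    (hne : u ≠ u') : z ∉ Set.range N.leaf := by
  rintro ⟨x, rfl⟩
  exact hne (eq_of_adj_leaf hu hu')

def CycleNeighbors {k : ℕ} (N : PhyloNet V X) (w : V) (v : Fin k → V) (a : Fin k → X) :
    Prop :=
  ∀ (i : Fin k) (u : V), N.G.Adj (v i) u →
    u = N.leaf (a i) ∨ (((i : ℕ) = 0 ∨ (i : ℕ) + 1 = k) ∧ u = w) ∨
      ∃ j : Fin k, (((j : ℕ) + 1 = (i : ℕ)) ∨ ((i : ℕ) + 1 = (j : ℕ))) ∧ u = v j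

def cycleWithLeaves {k : ℕ} (N : PhyloNet V X) (w : V) (v : Fin k → V) (a : Fin k → X) :
    Set V :=
  insert w (Set.range v ∪ Set.range (N.leaf ∘ a))

variable {k : ℕ} {w : V} {v : Fin k → V} {a : Fin k → X}

theorem CycleNeighbors.eq_of_adj_of_notMem (hN : N.CycleNeighbors w v a)
    (hleaf : ∀ i, N.G.Adj (N.leaf (a i)) (v i)) {x y : V} (hxy : N.G.Adj x y)
    (hx : x ∉ N.cycleWithLeaves w v a) (hy : y ∈ N.cycleWithLeaves w v a) : y = w := by
  simp only [cycleWithLeaves, Set.mem_insert_iff, Set.mem_union, Set.mem_range,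
    Function.comp_apply, not_or, not_exists] at hx hy
  obtain ⟨hxw, hxv, hxa⟩ := hx
  rcases hy with rfl | ⟨j, rfl⟩ | ⟨j, rfl⟩
  · rfl
  · rcases hN j x hxy.symm with rfl | ⟨-, rfl⟩ | ⟨j', -, rfl⟩
    exacts [(hxa j rfl).elim, (hxw rfl).elim, (hxv j' rfl).elim]
  · exact (hxv j (eq_of_adj_leaf hxy.symm (hleaf j)).symm).elim

theorem CycleNeighbors.length_eq_of_isPath_forward (hN : N.CycleNeighbors w v a)
    (hleaf : ∀ i, N.G.Adj (N.leaf (a i)) (v i)) (hvinj : Function.Injective v)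
    {l : Fin k} (hl : (l : ℕ) + 1 = k) (hlleaf : v l ∉ Set.range N.leaf) (i : Fin k)
    (hi : 0 < (i : ℕ)) (q : N.G.Walk (v i) (v l)) (hq : q.IsPath)
    (hprev : ∀ j : Fin k, (j : ℕ) + 1 = i → v j ∉ q.support) : q.length = k - 1 - i := by
  obtain ⟨n, hn⟩ : ∃ n, k - 1 - (i : ℕ) = n := ⟨_, rfl⟩
  induction n generalizing i with
  | zero =>
    obtain rfl : i = l := Fin.ext (by omega)
    rw [Walk.length_eq_zero_iff.mpr (Walk.isPath_iff_nil.mp hq), hn]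
  | succ n ih =>
    have hil : v i ≠ v l := fun h => by have := hvinj h; omega
    obtain ⟨u, hu, q', rfl⟩ := q.exists_eq_cons_of_ne hil
    have hq' := (Walk.cons_isPath_iff _ _).mp hq
    rcases hN i u hu with rfl | ⟨hend, rfl⟩ | ⟨j, hj | hj, rfl⟩
    · refine (hq.notMem_support_of_subsingleton (N.subsingleton_neighborSet_leaf (a i))
        (hleaf i).ne ?_ (by simp)).elim
      rintro h; exact hlleaf ⟨_, h⟩
    · exact (hil (congrArg v (Fin.ext (by omega)))).elim
    · exact (hprev j hj (by simp)).elim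
    · have := ih j (by omega) q' hq'.1 ?_ (by omega)
      · rw [Walk.length_cons]; omega
      · intro j' hj'
        obtain rfl : j' = i := Fin.ext (by omega)
        exact hq'.2

theorem CycleNeighbors.length_eq_one_of_isPath_from_base (hN : N.CycleNeighbors w v a)
    (hleaf : ∀ i, N.G.Adj (N.leaf (a i)) (v i)) (hvw : ∀ i, v i ≠ w)
    (hwleaf : w ∉ Set.range N.leaf) {f l : Fin k} (hf : (f : ℕ) = 0) (hl : (l : ℕ) + 1 = k)
    (q : N.G.Walk w (v l)) (hq : q.IsPath) (hfq : v f ∉ q.support) : q.length = 1 := by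
  obtain ⟨u, hu, q', rfl⟩ := q.exists_eq_cons_of_ne (hvw l).symm
  have hq' := (Walk.cons_isPath_iff _ _).mp hq
  suffices u = v l by
    subst this
    rw [Walk.length_cons, Walk.length_eq_zero_iff.mpr (Walk.isPath_iff_nil.mp hq'.1)]
  by_cases huS : u ∈ N.cycleWithLeaves w v a
  · simp only [cycleWithLeaves, Set.mem_insert_iff, Set.mem_union, Set.mem_range,
      Function.comp_apply] at huS
    rcases huS with rfl | ⟨j, rfl⟩ | ⟨j, rfl⟩
    · exact (N.G.irrefl hu).elim
    · rcases hN j w hu.symm with rfl | ⟨hj | hj, -⟩ | ⟨j', -, hj'⟩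
      · exact (hwleaf ⟨_, rfl⟩).elim
      · obtain rfl : j = f := Fin.ext (by omega)
        exact (hfq (by simp)).elim
      · rw [Fin.ext (show (j : ℕ) = l by omega)]
      · exact (hvw j' hj'.symm).elim
    · exact (hvw j (eq_of_adj_leaf hu.symm (hleaf j)).symm).elim
  · -- leaving the cycle and its leaves, the path could only come back through `w`
    have hmem := q'.mem_support_of_forall_adj_eq _ huS (by simp [cycleWithLeaves])
      fun _ _ => hN.eq_of_adj_of_notMem hleaf
    exact (hq'.2 hmem).elim

theorem CycleNeighbors.length_eq_two_or_of_isPath (hN : N.CycleNeighbors w v a)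
    (hleaf : ∀ i, N.G.Adj (N.leaf (a i)) (v i)) (hvinj : Function.Injective v)
    (hvw : ∀ i, v i ≠ w) (hwleaf : w ∉ Set.range N.leaf) {f l : Fin k} (hf : (f : ℕ) = 0)
    (hl : (l : ℕ) + 1 = k) (hfl : f ≠ l) (hlleaf : v l ∉ Set.range N.leaf)
    (r : N.G.Walk (v f) (v l)) (hr : r.IsPath) : r.length = 2 ∨ r.length = k - 1 := by
  obtain ⟨u, hu, r', rfl⟩ := r.exists_eq_cons_of_ne (hvinj.ne hfl)
  have hr' := (Walk.cons_isPath_iff _ _).mp hr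
  rcases hN f u hu with rfl | ⟨-, rfl⟩ | ⟨j, hj | hj, rfl⟩
  · refine (hr.notMem_support_of_subsingleton (N.subsingleton_neighborSet_leaf (a f))
      (hleaf f).ne ?_ (by simp)).elim
    rintro h; exact hlleaf ⟨_, h⟩
  · left
    rw [Walk.length_cons,
      hN.length_eq_one_of_isPath_from_base hleaf hvw hwleaf hf hl r' hr'.1 hr'.2]
  · omega
  · right
    have := hN.length_eq_of_isPath_forward hleaf hvinj hl hlleaf j (by omega) r' hr'.1
      fun j' hj' => by obtain rfl : j' = f := Fin.ext (by omega); exact hr'.2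
    rw [Walk.length_cons]
    omega

theorem CycleNeighbors.pathLengths_chain_ends (hN : N.CycleNeighbors w v a)
    (hleaf : ∀ i, N.G.Adj (N.leaf (a i)) (v i)) (hvinj : Function.Injective v)
    (hvw : ∀ i, v i ≠ w)
    (hchain : ∀ (i : ℕ) (hi : i + 1 < k),
      N.G.Adj (v ⟨i, Nat.lt_of_succ_lt hi⟩) (v ⟨i + 1, hi⟩))
    {f l : Fin k} (hf : (f : ℕ) = 0) (hl : (l : ℕ) + 1 = k) (hfl : f ≠ l)
    (hwf : N.G.Adj w (v f)) (hwl : N.G.Adj w (v l)) (hwleaf : w ∉ Set.range N.leaf)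
    (hlleaf : v l ∉ Set.range N.leaf) :
    N.G.pathLengths (v f) (v l) = {2, k - 1} := by
  ext n
  constructor
  · rintro ⟨r, hr, rfl⟩
    exact hN.length_eq_two_or_of_isPath hleaf hvinj hvw hwleaf hf hl hfl hlleaf r hr
  · rintro (rfl | rfl)
    · refine ⟨.cons hwf.symm (.cons hwl .nil), ?_, rfl⟩
      simp [Walk.isPath_def, hvw f, hvinj.ne hfl, (hvw l).symm]
    · exact Walk.exists_isPath_of_injective_of_adj hvinj hchain hf hl

theorem CycleNeighbors.pathLengths_leaf_ends (hN : N.CycleNeighbors w v a)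
    (hleaf : ∀ i, N.G.Adj (N.leaf (a i)) (v i)) (hvinj : Function.Injective v)
    (hvw : ∀ i, v i ≠ w)
    (hchain : ∀ (i : ℕ) (hi : i + 1 < k),
      N.G.Adj (v ⟨i, Nat.lt_of_succ_lt hi⟩) (v ⟨i + 1, hi⟩))
    {f l : Fin k} (hf : (f : ℕ) = 0) (hl : (l : ℕ) + 1 = k) (hfl : f ≠ l)
    (hwf : N.G.Adj w (v f)) (hwl : N.G.Adj w (v l)) :
    N.G.pathLengths (N.leaf (a f)) (N.leaf (a l)) = {4, k + 1} := by
  have hwleaf : w ∉ Set.range N.leaf := notMem_range_leaf_of_adj hwf hwl (hvinj.ne hfl)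
  have hfleaf : v f ∉ Set.range N.leaf :=
    notMem_range_leaf_of_adj hwf.symm (hleaf f).symm fun h => hwleaf ⟨_, h.symm⟩
  have hlleaf : v l ∉ Set.range N.leaf :=
    notMem_range_leaf_of_adj hwl.symm (hleaf l).symm fun h => hwleaf ⟨_, h.symm⟩
  have hleaves : N.leaf (a f) ≠ N.leaf (a l) := fun h =>
    hvinj.ne hfl (eq_of_adj_leaf (hleaf f) (h ▸ hleaf l))
  rw [pathLengths_eq_image_of_subsingleton (hleaf f) (hleaf l)
    (N.subsingleton_neighborSet_leaf _) (N.subsingleton_neighborSet_leaf _) hleaves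
    (fun h => hlleaf ⟨_, h⟩) (fun h => hfleaf ⟨_, h⟩),
    hN.pathLengths_chain_ends hleaf hvinj hvw hchain hf hl hfl hwf hwl hwleaf hlleaf,
    Set.image_pair]
  congr 2
  omega

end PhyloNet

/-- shortest and longest distances between the end-leaves of the
chain `(a_0, …, a_{k-1})` carried by a pendant level-1 blob (a cycle
`w, v_0, …, v_{k-1}` where `w` carries the non-trivial cut-edge). -/
theorem pendant_level1_chain_end_distances {V X : Type} (N : PhyloNet V X)
    (k : ℕ) (hk : 2 ≤ k)
    (w : V) (v : Fin k → V) (a : Fin k → X)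
    (hvinj : Function.Injective v) (hvw : ∀ i, v i ≠ w)
    (hw0 : N.G.Adj w (v ⟨0, by omega⟩))
    (hwl : N.G.Adj w (v ⟨k - 1, by omega⟩))
    (hchain : ∀ (i : ℕ) (hi : i + 1 < k),
      N.G.Adj (v ⟨i, by omega⟩) (v ⟨i + 1, hi⟩))
    (hleaf : ∀ i : Fin k, N.G.Adj (N.leaf (a i)) (v i))
    (hclosed : ∀ (i : Fin k) (u : V), N.G.Adj (v i) u →
      u = N.leaf (a i) ∨ (((i : ℕ) = 0 ∨ (i : ℕ) + 1 = k) ∧ u = w) ∨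
        ∃ j : Fin k, (((j : ℕ) + 1 = (i : ℕ)) ∨ ((i : ℕ) + 1 = (j : ℕ))) ∧
          u = v j) :
    (k ≤ 3 → N.dm (a ⟨0, by omega⟩) (a ⟨k - 1, by omega⟩) = k + 1) ∧
    (4 ≤ k → N.dm (a ⟨0, by omega⟩) (a ⟨k - 1, by omega⟩) = 4) ∧
    N.dl (a ⟨0, by omega⟩) (a ⟨k - 1, by omega⟩) = max (k + 1) 4 := by
  have hpaths := PhyloNet.CycleNeighbors.pathLengths_leaf_ends hclosed hleaf hvinj hvw hchain
    rfl (Nat.sub_add_cancel (by omega)) (by rw [ne_eq, Fin.mk.injEq]; omega) hw0 hwl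
  have hdm := dist_eq_min_of_pathLengths_eq hpaths
  refine ⟨fun _ => ?_, fun _ => ?_, ?_⟩
  · rw [PhyloNet.dm, hdm]; omega
  · rw [PhyloNet.dm, hdm]; omega
  · rw [PhyloNet.dl, ldistV_eq_max_of_pathLengths_eq hpaths, max_comm]
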